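/- Let p ≥ 2 be a real number, fix y₀ > 0, and set m = arcsinhₚ(y₀), λ₂ = −1/(p+1) and η₂ = ln(y₀/(m·(1 + y₀^p)^(1/p)))/m^p. Then for every y ∈ (0, y₀), writing x = arcsinhₚ(y), one has exp(λ₂·x^p) < y/(x·(1 + y^p)^(1/p)) < exp(η₂·x^p). (This is the double inequality exp(λ₂ x^p) < tanhₚ(x)/x < exp(η₂ x^p) for x ∈ (0, m), with η₂ = ln((tanhₚ m)/m)/m^p.) -/

import Mathlib

open Real

noncomputable def arcsinhp (p y : ℝ) : ℝ := ∫ t in (0:ℝ)..y, (1 + t ^ p) ^ (-1 / p)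

/-- helper: positive function from positive derivative -/
lemma pos_of_deriv_pos {F F' : ℝ → ℝ} (hc : ContinuousOn F (Set.Ici 0)) (h0 : F 0 = 0)
    (hd : ∀ x, 0 < x → HasDerivAt F (F' x) x) (hpos : ∀ x, 0 < x → 0 < F' x) :
    ∀ y, 0 < y → 0 < F y := by
  have mono : StrictMonoOn F (Set.Ici 0) := by
    refine strictMonoOn_of_deriv_pos (convex_Ici 0) hc ?_
    intro x hx
    rw [interior_Ici] at hx
    rw [(hd x hx).deriv]
    exact hpos x hx
  intro y hy
  have := mono (Set.self_mem_Ici) (Set.mem_Ici.2 hy.le) hy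
  rwa [h0] at this

section Basic
variable {p : ℝ} (hp1 : 1 < p)
include hp1

lemma integrand_contAt {t : ℝ} (ht : 0 ≤ t) :
    ContinuousAt (fun t : ℝ => (1 + t ^ p) ^ (-1 / p)) t := by
  have hp0 : 0 < p := lt_trans one_pos hp1
  have h1 : ContinuousAt (fun t : ℝ => 1 + t ^ p) t :=
    continuousAt_const.add (Real.continuousAt_rpow_const t p (Or.inr hp0.le))
  have h2 : ContinuousAt (fun z : ℝ => z ^ (-1 / p)) (1 + t ^ p) := by
    apply Real.continuousAt_rpow_const
    left
    have : 0 ≤ t ^ p := Real.rpow_nonneg ht p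
    positivity
  exact ContinuousAt.comp (g := fun z : ℝ => z ^ (-1 / p)) h2 h1

lemma arcsinhp_hasDerivAt {y : ℝ} (hy : 0 < y) :
    HasDerivAt (arcsinhp p) ((1 + y ^ p) ^ (-1 / p)) y := by
  apply intervalIntegral.integral_hasDerivAt_right
  · apply ContinuousOn.intervalIntegrable
    intro t ht
    rw [Set.uIcc_of_le hy.le] at ht
    exact (integrand_contAt hp1 ht.1).continuousWithinAt
  · exact ContinuousAt.stronglyMeasurableAtFilter isOpen_Ioi
      (fun x hx => integrand_contAt hp1 (le_of_lt hx)) y hy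
  · exact integrand_contAt hp1 hy.le

omit hp1 in
lemma arcsinhp_zero : arcsinhp p 0 = 0 := intervalIntegral.integral_same

lemma arcsinhp_le {y : ℝ} (hy : 0 ≤ y) : arcsinhp p y ≤ y := by
  have hp0 : 0 < p := lt_trans one_pos hp1
  have h : arcsinhp p y ≤ ∫ _ in (0:ℝ)..y, (1:ℝ) := by
    apply intervalIntegral.integral_mono_on hy
    · apply ContinuousOn.intervalIntegrable
      intro t ht
      rw [Set.uIcc_of_le hy] at ht
      exact (integrand_contAt hp1 ht.1).continuousWithinAt
    · exact intervalIntegrable_const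
    · intro t ht
      apply Real.rpow_le_one_of_one_le_of_nonpos
      · nlinarith [Real.rpow_nonneg ht.1 p]
      · rw [neg_div]
        simp [le_of_lt hp0, div_nonneg, hp0.le]
  simpa using h

lemma le_arcsinhp {y : ℝ} (hy : 0 ≤ y) : y * (1 + y ^ p) ^ (-1 / p) ≤ arcsinhp p y := by
  have hp0 : 0 < p := lt_trans one_pos hp1
  have h : (∫ _ in (0:ℝ)..y, (1 + y ^ p) ^ (-1 / p)) ≤ arcsinhp p y := by
    apply intervalIntegral.integral_mono_on hy
    · exact intervalIntegrable_const
    · apply ContinuousOn.intervalIntegrable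
      intro t ht
      rw [Set.uIcc_of_le hy] at ht
      exact (integrand_contAt hp1 ht.1).continuousWithinAt
    · intro t ht
      apply Real.rpow_le_rpow_of_nonpos
      · have : 0 ≤ t ^ p := Real.rpow_nonneg ht.1 p
        positivity
      · have : t ^ p ≤ y ^ p := Real.rpow_le_rpow ht.1 ht.2 hp0.le
        linarith
      · rw [neg_div]
        simp [div_nonneg, hp0.le]
  simpa [mul_comm] using h

lemma arcsinhp_pos {y : ℝ} (hy : 0 < y) : 0 < arcsinhp p y := by
  have h := le_arcsinhp hp1 hy.le
  have : 0 < (1 + y ^ p) ^ (-1 / p) := by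
    apply Real.rpow_pos_of_pos
    nlinarith [Real.rpow_nonneg hy.le p]
  nlinarith

end Basic

/-- continuity helper -/
lemma cont_one_add_rpow {p : ℝ} (hp0 : 0 < p) (c : ℝ) {t : ℝ} (ht : 0 ≤ t) :
    ContinuousAt (fun t : ℝ => (1 + t ^ p) ^ c) t := by
  have h1 : ContinuousAt (fun t : ℝ => 1 + t ^ p) t :=
    continuousAt_const.add (Real.continuousAt_rpow_const t p (Or.inr hp0.le))
  have h2 : ContinuousAt (fun z : ℝ => z ^ c) (1 + t ^ p) := by
    apply Real.continuousAt_rpow_const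
    left
    have : 0 ≤ t ^ p := Real.rpow_nonneg ht p
    positivity
  exact ContinuousAt.comp (g := fun z : ℝ => z ^ c) h2 h1

lemma contOn_shift_rpow (c : ℝ) : ContinuousOn (fun u : ℝ => (1 + u) ^ c) (Set.Ici 0) := by
  intro u hu
  have h1 : ContinuousAt (fun u : ℝ => 1 + u) u := continuousAt_const.add continuousAt_id
  have h2 : ContinuousAt (fun z : ℝ => z ^ c) (1 + u) := by
    apply Real.continuousAt_rpow_const
    left
    have : (0:ℝ) ≤ u := hu
    positivity
  exact (ContinuousAt.comp (g := fun z : ℝ => z ^ c) h2 h1).continuousWithinAt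

/-- second order Taylor lower bound for rpow with exponent in (0,1) -/
lemma rpow_ge_taylor2 {a : ℝ} (ha0 : 0 < a) (ha1 : a < 1) :
    ∀ u : ℝ, 0 ≤ u → 1 + a * u - a * (1 - a) / 2 * u ^ 2 ≤ (1 + u) ^ a := by
  have inner : ∀ u : ℝ, 0 < u → 0 < a * (1 + u) ^ (a - 1) - a + a * (1 - a) * u := by
    apply pos_of_deriv_pos (F' := fun u => a * (a - 1) * (1 + u) ^ (a - 2) + a * (1 - a))
    · apply ContinuousOn.add
      · apply ContinuousOn.sub
        · exact (contOn_shift_rpow (a - 1)).const_smul a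
        · exact continuousOn_const
      · exact (continuousOn_id).const_smul (a * (1 - a))
    · simp
    · intro x hx
      have h1 : (1:ℝ) + x ≠ 0 := by positivity
      have hb : HasDerivAt (fun u : ℝ => (1 + u) ^ (a - 1)) (1 * (a - 1) * (1 + x) ^ (a - 1 - 1)) x :=
        ((hasDerivAt_id x).const_add 1).rpow_const (Or.inl h1)
      have := ((hb.const_mul a).sub_const a).add (((hasDerivAt_id x).const_mul (a * (1 - a))))
      refine this.congr_deriv ?_
      ring
    · intro x hx
      have h1 : (1 + x) ^ (a - 2) < 1 :=
        Real.rpow_lt_one_of_one_lt_of_neg (by linarith) (by linarith)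
      have h2 : a * (a - 1) * 1 < a * (a - 1) * (1 + x) ^ (a - 2) := by
        apply mul_lt_mul_of_neg_left h1
        nlinarith
      nlinarith
  intro u hu
  rcases eq_or_lt_of_le hu with rfl | hu'
  · simp
  · have key : ∀ u : ℝ, 0 < u → 0 < (1 + u) ^ a - 1 - a * u + a * (1 - a) / 2 * u ^ 2 := by
        apply pos_of_deriv_pos
          (F' := fun u => a * (1 + u) ^ (a - 1) - a + a * (1 - a) * u)
        · apply ContinuousOn.add
          · apply ContinuousOn.sub
            · apply ContinuousOn.sub
              · exact contOn_shift_rpow a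
              · exact continuousOn_const
            · exact (continuousOn_id).const_smul a
          · apply ContinuousOn.mul continuousOn_const
            exact (continuousOn_id).pow 2
        · simp
        · intro x hx
          have h1 : (1:ℝ) + x ≠ 0 := by positivity
          have hb : HasDerivAt (fun u : ℝ => (1 + u) ^ a) (1 * a * (1 + x) ^ (a - 1)) x :=
            ((hasDerivAt_id x).const_add 1).rpow_const (Or.inl h1)
          have h2 : HasDerivAt (fun u : ℝ => a * (1 - a) / 2 * u ^ 2)
              (a * (1 - a) / 2 * (2 * x)) x := by
            have := (hasDerivAt_pow 2 x).const_mul (a * (1 - a) / 2)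
            refine this.congr_deriv ?_
            norm_num
          have := ((hb.sub_const 1).sub ((hasDerivAt_id x).const_mul a)).add h2
          refine this.congr_deriv ?_
          ring
        · intro x hx
          have := inner x hx
          linarith
    have := key u hu'
    linarith

section Bounds
variable {p : ℝ} (hp1 : 1 < p)
include hp1

lemma arcsinhp_nonneg {y : ℝ} (hy : 0 ≤ y) : 0 ≤ arcsinhp p y := by
  rcases eq_or_lt_of_le hy with rfl | hy'
  · rw [arcsinhp_zero]
  · exact (arcsinhp_pos hp1 hy').le

lemma arcsinhp_contOn : ContinuousOn (arcsinhp p) (Set.Ici 0) := by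
  intro x hx
  rcases eq_or_lt_of_le (Set.mem_Ici.1 hx) with hx' | hx'
  · rw [ContinuousWithinAt, ← hx', arcsinhp_zero]
    apply squeeze_zero' (g := fun t => t)
    · filter_upwards [self_mem_nhdsWithin] with t ht
      exact arcsinhp_nonneg hp1 ht
    · filter_upwards [self_mem_nhdsWithin] with t ht
      exact arcsinhp_le hp1 ht
    · exact Filter.Tendsto.mono_left Filter.tendsto_id nhdsWithin_le_nhds
  · exact ((arcsinhp_hasDerivAt hp1 hx').continuousAt).continuousWithinAt

lemma arcsinhp_lt_U {y : ℝ} (hy : 0 < y) :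
    arcsinhp p y < y * (1 + y ^ p) ^ (-(1 / (p * (p + 1)))) := by
  have hp0 : 0 < p := lt_trans one_pos hp1
  have hq0 : (0:ℝ) < p + 1 := by linarith
  set β : ℝ := 1 / (p * (p + 1)) with hβ
  have hβ0 : 0 < β := by positivity
  have hpβ : p * β = 1 / (p+1) := by rw [hβ]; field_simp
  have key := pos_of_deriv_pos
      (F := fun y => y * (1 + y ^ p) ^ (-β) - arcsinhp p y)
      (F' := fun y => 1 * (1 + y ^ p) ^ (-β)
        + y * (p * y ^ (p - 1) * (-β) * (1 + y ^ p) ^ (-β - 1))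
        - (1 + y ^ p) ^ (-1 / p))
      ?_ ?_ ?_ ?_ y hy
  · have key2 : 0 < y * (1 + y ^ p) ^ (-β) - arcsinhp p y := key
    linarith
  · apply ContinuousOn.sub ?_ (arcsinhp_contOn hp1)
    apply ContinuousOn.mul continuousOn_id
    intro t ht
    exact (cont_one_add_rpow hp0 (-β) ht).continuousWithinAt
  · simp [arcsinhp_zero (p := p)]
  · intro x hx
    have hs0 : (0:ℝ) < 1 + x ^ p := by
      have := Real.rpow_nonneg hx.le p; positivity
    have hinner : HasDerivAt (fun y : ℝ => 1 + y ^ p) (p * x ^ (p - 1)) x :=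
      (Real.hasDerivAt_rpow_const (Or.inl hx.ne')).const_add 1
    have houter : HasDerivAt (fun y : ℝ => (1 + y ^ p) ^ (-β))
        (p * x ^ (p - 1) * (-β) * (1 + x ^ p) ^ (-β - 1)) x :=
      hinner.rpow_const (p := -β) (Or.inl hs0.ne')
    exact ((hasDerivAt_id x).mul houter).sub (arcsinhp_hasDerivAt hp1 hx)
  · intro x hx
    set u : ℝ := x ^ p with hu
    have hu0 : 0 < u := Real.rpow_pos_of_pos hx p
    have hs0 : (0:ℝ) < 1 + u := by linarith
    have hxpr : x ^ (p - 1) * x = u := by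
      rw [← Real.rpow_add_one hx.ne' (p - 1)]; norm_num; exact hu.symm
    have e1 : (1 + u) ^ (-β - 1) * (1 + u) = (1 + u) ^ (-β) := by
      rw [← Real.rpow_add_one hs0.ne' (-β - 1)]; norm_num
    have e2 : (1 + u) ^ (-1 / p) = (1 + u) ^ (-β - 1) * (1 + u) ^ (p / (p + 1)) := by
      rw [← Real.rpow_add hs0]
      congr 1
      rw [hβ]; field_simp; ring
    have bern : (1 + u) ^ (p / (p + 1)) < 1 + p / (p + 1) * u := by
      have := rpow_one_add_lt_one_add_mul_self (s := u) (by linarith) hu0.ne'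
        (p := p / (p + 1)) (by positivity) (by rw [div_lt_one hq0]; linarith)
      linarith
    have hX : (0:ℝ) < (1 + u) ^ (-β - 1) := Real.rpow_pos_of_pos hs0 _
    have hrest : 1 * (1 + u) ^ (-β) + x * (p * x ^ (p - 1) * (-β) * (1 + u) ^ (-β - 1))
        = (1 + u) ^ (-β - 1) * (1 + p / (p + 1) * u) := by
      rw [show x * (p * x ^ (p - 1) * (-β) * (1 + u) ^ (-β - 1))
            = -(p * β * (x ^ (p - 1) * x) * (1 + u) ^ (-β - 1)) by ring, hxpr, hpβ, ← e1]
      field_simp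
      ring
    rw [sub_pos, e2, hrest]
    exact mul_lt_mul_of_pos_left bern hX

lemma U_lt_arcsinhp_add {y : ℝ} (hy : 0 < y) :
    y * (1 + y ^ p) ^ (-(1 / (p * (p + 1))))
      < arcsinhp p y + p / (2 * (p + 1) ^ 2 * (2 * p + 1)) * y ^ (2 * p + 1) := by
  have hp0 : 0 < p := lt_trans one_pos hp1
  have hq0 : (0:ℝ) < p + 1 := by linarith
  set β : ℝ := 1 / (p * (p + 1)) with hβ
  have hβ0 : 0 < β := by positivity
  have hpβ : p * β = 1 / (p+1) := by rw [hβ]; field_simp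
  set K : ℝ := p / (2 * (p + 1) ^ 2 * (2 * p + 1)) with hK
  have hK0 : 0 < K := by rw [hK]; positivity
  have key := pos_of_deriv_pos
      (F := fun y => arcsinhp p y + K * y ^ (2 * p + 1) - y * (1 + y ^ p) ^ (-β))
      (F' := fun y => (1 + y ^ p) ^ (-1 / p) + K * ((2 * p + 1) * y ^ (2 * p + 1 - 1))
        - (1 * (1 + y ^ p) ^ (-β)
           + y * (p * y ^ (p - 1) * (-β) * (1 + y ^ p) ^ (-β - 1))))
      ?_ ?_ ?_ ?_ y hy
  · have key2 : 0 < arcsinhp p y + K * y ^ (2 * p + 1) - y * (1 + y ^ p) ^ (-β) := key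
    linarith
  · apply ContinuousOn.sub
    · apply ContinuousOn.add (arcsinhp_contOn hp1)
      apply ContinuousOn.mul continuousOn_const
      intro t ht
      exact (Real.continuousAt_rpow_const t (2 * p + 1) (Or.inr (by linarith))).continuousWithinAt
    · apply ContinuousOn.mul continuousOn_id
      intro t ht
      exact (cont_one_add_rpow hp0 (-β) ht).continuousWithinAt
  · simp [arcsinhp_zero (p := p), Real.zero_rpow (show (2:ℝ) * p + 1 ≠ 0 from (by nlinarith : (0:ℝ) < 2 * p + 1).ne')]
  · intro x hx
    have hs0 : (0:ℝ) < 1 + x ^ p := by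
      have := Real.rpow_nonneg hx.le p; positivity
    have hinner : HasDerivAt (fun y : ℝ => 1 + y ^ p) (p * x ^ (p - 1)) x :=
      (Real.hasDerivAt_rpow_const (Or.inl hx.ne')).const_add 1
    have houter : HasDerivAt (fun y : ℝ => (1 + y ^ p) ^ (-β))
        (p * x ^ (p - 1) * (-β) * (1 + x ^ p) ^ (-β - 1)) x :=
      hinner.rpow_const (p := -β) (Or.inl hs0.ne')
    have hpow : HasDerivAt (fun y : ℝ => K * y ^ (2 * p + 1))
        (K * ((2 * p + 1) * x ^ (2 * p + 1 - 1))) x :=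
      (Real.hasDerivAt_rpow_const (Or.inl hx.ne')).const_mul K
    exact ((arcsinhp_hasDerivAt hp1 hx).add hpow).sub ((hasDerivAt_id x).mul houter)
  · intro x hx
    set a' : ℝ := p / (p + 1) with ha'
    have ha'0 : 0 < a' := by positivity
    have ha'1 : a' < 1 := by rw [ha', div_lt_one hq0]; linarith
    set u : ℝ := x ^ p with hu
    have hu0 : 0 < u := Real.rpow_pos_of_pos hx p
    have hs0 : (0:ℝ) < 1 + u := by linarith
    have hxpr : x ^ (p - 1) * x = u := by
      rw [← Real.rpow_add_one hx.ne' (p - 1)]; norm_num; exact hu.symm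
    have husq : x ^ (2 * p + 1 - 1) = u ^ 2 := by
      rw [show (2 : ℝ) * p + 1 - 1 = p + p by ring, Real.rpow_add hx, hu]; ring
    have e1 : (1 + u) ^ (-β - 1) * (1 + u) = (1 + u) ^ (-β) := by
      rw [← Real.rpow_add_one hs0.ne' (-β - 1)]; norm_num
    have e2 : (1 + u) ^ (-1 / p) = (1 + u) ^ (-β - 1) * (1 + u) ^ a' := by
      rw [← Real.rpow_add hs0]
      congr 1
      rw [ha', hβ]; field_simp; ring
    have taylor : 1 + a' * u - a' * (1 - a') / 2 * u ^ 2 ≤ (1 + u) ^ a' :=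
      rpow_ge_taylor2 ha'0 ha'1 u hu0.le
    have bern : (1 + u) ^ a' ≤ 1 + a' * u :=
      rpow_one_add_le_one_add_mul_self (by linarith) ha'0.le ha'1.le
    have hX : (0:ℝ) < (1 + u) ^ (-β - 1) := Real.rpow_pos_of_pos hs0 _
    have hX1 : (1 + u) ^ (-β - 1) < 1 :=
      Real.rpow_lt_one_of_one_lt_of_neg (by linarith) (by linarith)
    have hM : K * (2 * p + 1) = a' * (1 - a') / 2 := by
      rw [hK, ha']; field_simp; ring
    -- F' = K(2p+1)u² - X*((1+a'u) - (1+u)^{a'}) with X<1 and 0 ≤ (1+a'u)-(1+u)^{a'} ≤ M u²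
    have hrest : 1 * (1 + u) ^ (-β) + x * (p * x ^ (p - 1) * (-β) * (1 + u) ^ (-β - 1))
        = (1 + u) ^ (-β - 1) * (1 + a' * u) := by
      rw [show x * (p * x ^ (p - 1) * (-β) * (1 + u) ^ (-β - 1))
            = -(p * β * (x ^ (p - 1) * x) * (1 + u) ^ (-β - 1)) by ring, hxpr, hpβ, ← e1]
      rw [ha']
      field_simp
      ring
    rw [sub_pos, hrest, husq, e2]
    have hMu : 0 < a' * (1 - a') / 2 * u ^ 2 := by
      have hu2 : 0 < u ^ 2 := by positivity
      have h1a : 0 < 1 - a' := by linarith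
      have := mul_pos (div_pos (mul_pos ha'0 h1a) two_pos) hu2
      linarith
    nlinarith [mul_lt_mul_of_pos_right hX1 hMu,
      mul_le_mul_of_nonneg_left (sub_nonneg.2 taylor) hX.le,
      mul_le_mul_of_nonneg_left (sub_nonneg.2 bern) hX.le]

end Bounds

noncomputable def QQ (p y : ℝ) : ℝ :=
  (arcsinhp p y * (1 + y ^ p) ^ ((1 - p) / p) - y) / (p * arcsinhp p y ^ p * y)

noncomputable def GG (p y : ℝ) : ℝ :=
  Real.log y - p⁻¹ * Real.log (1 + y ^ p) - Real.log (arcsinhp p y)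

noncomputable def HH (p y : ℝ) : ℝ := arcsinhp p y ^ p

section Key
variable {p : ℝ} (hp : 2 ≤ p)
include hp

set_option maxHeartbeats 1000000 in
lemma QQ_hasDerivAt_pos {y : ℝ} (hy : 0 < y) :
    ∃ q', HasDerivAt (QQ p) q' y ∧ 0 < q' := by
  have hp1 : 1 < p := by linarith
  have hp0 : 0 < p := by linarith
  have hq0 : (0:ℝ) < p + 1 := by linarith
  have ha : 0 < arcsinhp p y := arcsinhp_pos hp1 hy
  have hu0 : 0 < y ^ p := Real.rpow_pos_of_pos hy p
  have hs0 : (0:ℝ) < 1 + y ^ p := by linarith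
  have hs1 : (1:ℝ) < 1 + y ^ p := by linarith
  -- derivative of numerator
  have hinner : HasDerivAt (fun x : ℝ => 1 + x ^ p) (p * y ^ (p - 1)) y :=
    (Real.hasDerivAt_rpow_const (Or.inl hy.ne')).const_add 1
  have hN : HasDerivAt (fun x => arcsinhp p x * (1 + x ^ p) ^ ((1 - p) / p) - x)
      ((1 + y ^ p) ^ (-1 / p) * (1 + y ^ p) ^ ((1 - p) / p)
        + arcsinhp p y * (p * y ^ (p - 1) * ((1 - p) / p) * (1 + y ^ p) ^ ((1 - p) / p - 1)) - 1) y :=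
    ((arcsinhp_hasDerivAt hp1 hy).mul (hinner.rpow_const (Or.inl hs0.ne'))).sub (hasDerivAt_id y)
  -- derivative of denominator
  have hD : HasDerivAt (fun x => p * arcsinhp p x ^ p * x)
      (p * ((1 + y ^ p) ^ (-1 / p) * p * arcsinhp p y ^ (p - 1)) * y
        + p * arcsinhp p y ^ p * 1) y :=
    (((arcsinhp_hasDerivAt hp1 hy).rpow_const (Or.inl ha.ne')).const_mul p).mul (hasDerivAt_id y)
  have hD0 : p * arcsinhp p y ^ p * y ≠ 0 := by
    have : 0 < arcsinhp p y ^ p := Real.rpow_pos_of_pos ha p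
    positivity
  have hQ := hN.div hD hD0
  refine ⟨_, hQ, ?_⟩
  -- positivity of the derivative
  apply div_pos ?_ (by positivity)
  -- notation
  set a : ℝ := arcsinhp p y with hadef
  set u : ℝ := y ^ p with hudef
  set s : ℝ := 1 + u with hsdef
  set g : ℝ := s ^ (1/p) with hgdef
  have hg0 : 0 < g := Real.rpow_pos_of_pos hs0 _
  set h : ℝ := s ^ (1/(p+1)) with hhdef
  have hh0 : 0 < h := Real.rpow_pos_of_pos hs0 _
  set ap : ℝ := a ^ (p - 1) with hapdef
  have hap0 : 0 < ap := Real.rpow_pos_of_pos ha _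
  -- rpow rewrites
  have r1 : s ^ ((1 - p) / p) = g / s := by
    rw [show (1 - p) / p = 1/p - 1 by field_simp, Real.rpow_sub hs0, Real.rpow_one, hgdef]
  have r2 : s ^ ((1 - p) / p - 1) = g / s ^ 2 := by
    rw [show (1 - p) / p - 1 = 1/p - ((2:ℕ):ℝ) by push_cast; field_simp; ring,
      Real.rpow_sub hs0, Real.rpow_natCast, hgdef]
  have r3 : s ^ (-1 / p) = 1 / g := by
    rw [neg_div, Real.rpow_neg hs0.le, ← hgdef]
    exact (one_div g).symm
  have r4 : a ^ p = ap * a := by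
    rw [hapdef, ← Real.rpow_add_one ha.ne' (p - 1)]; norm_num
  have r5 : y ^ (p - 1) = u / y := by
    rw [eq_div_iff hy.ne', ← Real.rpow_add_one hy.ne' (p - 1)]; norm_num; exact hudef.symm
  -- the factorization
  have hfact : ((1 + y ^ p) ^ (-1 / p) * (1 + y ^ p) ^ ((1 - p) / p)
        + a * (p * y ^ (p - 1) * ((1 - p) / p) * (1 + y ^ p) ^ ((1 - p) / p - 1)) - 1)
          * (p * a ^ p * y)
      - (a * (1 + y ^ p) ^ ((1 - p) / p) - y)
          * (p * ((1 + y ^ p) ^ (-1 / p) * p * a ^ (p - 1)) * y + p * a ^ p * 1)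
      = p * ap * g / s ^ 2
        * (p * y ^ 2 * s ^ 2 / g ^ 2 - (p - 1) * y * (s / g) * a - (1 + p * u) * a ^ 2) := by
    rw [show (1:ℝ) + y ^ p = s by rw [hsdef, hudef], r1, r2, r3, r4, r5, ← hapdef]
    field_simp
    ring
  rw [hfact]
  -- positivity of P
  have hUa : a < y * (h / g) := by
    have h1 := arcsinhp_lt_U hp1 hy
    have h2 : (1 + y ^ p) ^ (-(1 / (p * (p + 1)))) = h / g := by
      rw [show (1:ℝ) + y ^ p = s by rw [hsdef, hudef], hhdef, hgdef, ← Real.rpow_sub hs0]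
      congr 1
      field_simp
      ring
    rw [h2] at h1
    exact h1
  have hPU : 0 ≤ p * s ^ 2 - (p - 1) * s * h - (1 + p * u) * h ^ 2 := by
    set σ : ℝ := s ^ (p / (p + 1)) with hσdef
    have hσ1 : 1 ≤ σ := Real.one_le_rpow hs1.le (by positivity)
    have hsσh : s = σ * h := by
      rw [hσdef, hhdef, ← Real.rpow_add hs0]
      rw [show p / (p + 1) + 1 / (p + 1) = 1 by field_simp, Real.rpow_one]
    have hBern : h ≤ 1 + 1 / p * (σ - 1) := by
      have hb := rpow_one_add_le_one_add_mul_self (s := σ - 1) (by linarith)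
        (p := 1 / p) (by positivity) (by rw [div_le_one hp0]; linarith)
      rw [show (1:ℝ) + (σ - 1) = σ by ring] at hb
      have hhσ : h = σ ^ (1 / p) := by
        rw [hσdef, hhdef, ← Real.rpow_mul hs0.le]
        congr 1
        field_simp
      rw [hhσ]
      exact hb
    have hus : u = s - 1 := by rw [hsdef]; ring
    -- p·σ·h ≤ σ·(p + σ - 1)
    have hkey : p * σ * h ≤ σ * (p + σ - 1) := by
      have := mul_le_mul_of_nonneg_left hBern (by positivity : (0:ℝ) ≤ p * σ)
      calc p * σ * h ≤ p * σ * (1 + 1 / p * (σ - 1)) := this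
        _ = σ * (p + σ - 1) := by field_simp; ring
    rw [hus, hsσh]
    nlinarith [mul_le_mul_of_nonneg_right hkey (sq_nonneg h),
      mul_nonneg (mul_nonneg (by linarith : (0:ℝ) ≤ p - 1) (sq_nonneg (σ - 1))) (sq_nonneg h)]
  have hP : 0 < p * y ^ 2 * s ^ 2 / g ^ 2 - (p - 1) * y * (s / g) * a - (1 + p * u) * a ^ 2 := by
    set U : ℝ := y * (h / g) with hUdef
    have hU0 : 0 < U := by positivity
    have h1 : (p - 1) * y * (s / g) * a < (p - 1) * y * (s / g) * U := by
      apply mul_lt_mul_of_pos_left hUa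
      have hsg : 0 < s / g := by positivity
      exact mul_pos (mul_pos (by linarith) hy) hsg
    have h2 : (1 + p * u) * a ^ 2 < (1 + p * u) * U ^ 2 := by
      apply mul_lt_mul_of_pos_left ?_ (by positivity)
      nlinarith
    have hPU2 : 0 ≤ p * y ^ 2 * s ^ 2 / g ^ 2 - (p - 1) * y * (s / g) * U - (1 + p * u) * U ^ 2 := by
      have expand : p * y ^ 2 * s ^ 2 / g ^ 2 - (p - 1) * y * (s / g) * U - (1 + p * u) * U ^ 2
          = y ^ 2 / g ^ 2 * (p * s ^ 2 - (p - 1) * s * h - (1 + p * u) * h ^ 2) := by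
        rw [hUdef]; field_simp
      rw [expand]
      positivity
    linarith
  have : 0 < p * ap * g / s ^ 2 := by positivity
  exact mul_pos this hP

end Key

section Derivs
variable {p : ℝ} (hp : 2 ≤ p)
include hp

lemma HH_hasDerivAt {y : ℝ} (hy : 0 < y) :
    HasDerivAt (HH p) ((1 + y ^ p) ^ (-1 / p) * p * arcsinhp p y ^ (p - 1)) y := by
  have hp1 : 1 < p := by linarith
  exact (arcsinhp_hasDerivAt hp1 hy).rpow_const (Or.inl (arcsinhp_pos hp1 hy).ne')

lemma HH_deriv_pos {y : ℝ} (hy : 0 < y) :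
    0 < (1 + y ^ p) ^ (-1 / p) * p * arcsinhp p y ^ (p - 1) := by
  have hp1 : 1 < p := by linarith
  have ha : 0 < arcsinhp p y := arcsinhp_pos hp1 hy
  have hu0 : 0 < y ^ p := Real.rpow_pos_of_pos hy p
  have h1 : 0 < (1 + y ^ p) ^ (-1 / p) := Real.rpow_pos_of_pos (by linarith) _
  have h2 : 0 < arcsinhp p y ^ (p - 1) := Real.rpow_pos_of_pos ha _
  positivity

set_option maxHeartbeats 1000000 in
lemma GG_hasDerivAt {y : ℝ} (hy : 0 < y) :
    HasDerivAt (GG p) (QQ p y * ((1 + y ^ p) ^ (-1 / p) * p * arcsinhp p y ^ (p - 1))) y := by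
  have hp1 : 1 < p := by linarith
  have hp0 : 0 < p := by linarith
  have ha : 0 < arcsinhp p y := arcsinhp_pos hp1 hy
  have hu0 : 0 < y ^ p := Real.rpow_pos_of_pos hy p
  have hs0 : (0:ℝ) < 1 + y ^ p := by linarith
  have hinner : HasDerivAt (fun x : ℝ => 1 + x ^ p) (p * y ^ (p - 1)) y :=
    (Real.hasDerivAt_rpow_const (Or.inl hy.ne')).const_add 1
  have hlog1 : HasDerivAt Real.log y⁻¹ y := Real.hasDerivAt_log hy.ne'
  have hlog2 : HasDerivAt (fun x : ℝ => Real.log (1 + x ^ p))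
      (p * y ^ (p - 1) / (1 + y ^ p)) y := hinner.log hs0.ne'
  have hlog3 : HasDerivAt (fun x : ℝ => Real.log (arcsinhp p x))
      ((1 + y ^ p) ^ (-1 / p) / arcsinhp p y) y := (arcsinhp_hasDerivAt hp1 hy).log ha.ne'
  have hG : HasDerivAt (GG p)
      (y⁻¹ - p⁻¹ * (p * y ^ (p - 1) / (1 + y ^ p)) - (1 + y ^ p) ^ (-1 / p) / arcsinhp p y) y :=
    (hlog1.sub (hlog2.const_mul p⁻¹)).sub hlog3
  convert hG using 1
  -- identity QQ * H' = G'
  set a : ℝ := arcsinhp p y with hadef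
  set u : ℝ := y ^ p with hudef
  set s : ℝ := 1 + u with hsdef
  set g : ℝ := s ^ (1/p) with hgdef
  have hg0 : 0 < g := Real.rpow_pos_of_pos hs0 _
  set ap : ℝ := a ^ (p - 1) with hapdef
  have hap0 : 0 < ap := Real.rpow_pos_of_pos ha _
  have r1 : s ^ ((1 - p) / p) = g / s := by
    rw [show (1 - p) / p = 1/p - 1 by field_simp, Real.rpow_sub hs0, Real.rpow_one, hgdef]
  have r3 : s ^ (-1 / p) = 1 / g := by
    rw [neg_div, Real.rpow_neg hs0.le, ← hgdef]
    exact (one_div g).symm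
  have r4 : a ^ p = ap * a := by
    rw [hapdef, ← Real.rpow_add_one ha.ne' (p - 1)]; norm_num
  have r5 : y ^ (p - 1) = u / y := by
    rw [eq_div_iff hy.ne', ← Real.rpow_add_one hy.ne' (p - 1)]; norm_num; exact hudef.symm
  rw [QQ, show (1:ℝ) + y ^ p = s by rw [hsdef, hudef], ← hadef, r1, r3, r4, r5]
  field_simp
  ring

set_option maxHeartbeats 1000000 in
lemma QQ_tendsto : Filter.Tendsto (QQ p) (nhdsWithin 0 (Set.Ioi 0)) (nhds (-1/(p+1))) := by
  have hp1 : 1 < p := by linarith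
  have hp0 : 0 < p := by linarith
  have hq0 : (0:ℝ) < p + 1 := by linarith
  set c : ℝ := -(p/(p+1)) with hc
  set K : ℝ := p / (2 * (p + 1) ^ 2 * (2 * p + 1)) with hK
  have hK0 : 0 < K := by rw [hK]; positivity
  set Qhi : ℝ → ℝ := fun y => ((1 + y ^ p) ^ c - 1) / (p * y ^ p) with hQhi
  set Qlo : ℝ → ℝ := fun y => (1 + y ^ p) * (Qhi y - K / p * y ^ p) with hQlo
  have hu_t : Filter.Tendsto (fun y : ℝ => y ^ p) (nhdsWithin 0 (Set.Ioi 0)) (nhds 0) := by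
    have hcont := (Real.continuousAt_rpow_const 0 p (Or.inr hp0.le)).tendsto
    rw [Real.zero_rpow hp0.ne'] at hcont
    exact hcont.mono_left nhdsWithin_le_nhds
  -- pointwise bounds
  have hbound : ∀ y : ℝ, 0 < y → Qlo y ≤ QQ p y ∧ QQ p y ≤ Qhi y := by
    intro y hy
    have ha : 0 < arcsinhp p y := arcsinhp_pos hp1 hy
    have hu0 : 0 < y ^ p := Real.rpow_pos_of_pos hy p
    have hs0 : (0:ℝ) < 1 + y ^ p := by linarith
    have hs1 : (1:ℝ) < 1 + y ^ p := by linarith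
    set a : ℝ := arcsinhp p y with hadef
    set u : ℝ := y ^ p with hudef
    set s : ℝ := 1 + u with hsdef
    have es : (1:ℝ) + y ^ p = s := by rw [hsdef, hudef]
    set g : ℝ := s ^ (1/p) with hgdef
    have hg0 : 0 < g := Real.rpow_pos_of_pos hs0 _
    set h : ℝ := s ^ (1/(p+1)) with hhdef
    have hh0 : 0 < h := Real.rpow_pos_of_pos hs0 _
    have r1 : s ^ ((1 - p) / p) = g / s := by
      rw [show (1 - p) / p = 1/p - 1 by field_simp, Real.rpow_sub hs0, Real.rpow_one, hgdef]
    have hgs : g ≤ s := by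
      calc g = s ^ (1/p) := hgdef
        _ ≤ s ^ (1:ℝ) := Real.rpow_le_rpow_of_exponent_le hs1.le (by rw [div_le_one hp0]; linarith)
        _ = s := Real.rpow_one s
    have hgp : g ^ p = s := by
      rw [hgdef, ← Real.rpow_mul hs0.le, one_div, inv_mul_cancel₀ hp0.ne', Real.rpow_one]
    have hμ : h / s = s ^ c := by
      rw [hhdef, hc, show -(p/(p+1)) = 1/(p+1) - 1 by field_simp; ring,
        Real.rpow_sub hs0, Real.rpow_one]
    have hν0 : s ^ c ≤ 1 := by
      apply Real.rpow_le_one_of_one_le_of_nonpos hs1.le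
      rw [hc, neg_nonpos]
      positivity
    have haU : a < y * (h / g) := by
      have h1 := arcsinhp_lt_U hp1 hy
      have h2 : (1 + y ^ p) ^ (-(1 / (p * (p + 1)))) = h / g := by
        rw [es, hhdef, hgdef, ← Real.rpow_sub hs0]
        congr 1
        field_simp
        try ring
      rw [h2] at h1
      exact h1
    have haL : y * (h / g) - K * (y * u ^ 2) < a := by
      have h1 := U_lt_arcsinhp_add hp1 hy
      have h2 : (1 + y ^ p) ^ (-(1 / (p * (p + 1)))) = h / g := by
        rw [es, hhdef, hgdef, ← Real.rpow_sub hs0]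
        congr 1
        field_simp
        try ring
      have h3 : y ^ (2 * p + 1) = y * u ^ 2 := by
        rw [show (2:ℝ) * p + 1 = p + p + 1 by ring, Real.rpow_add_one hy.ne',
          Real.rpow_add hy, hudef]
        ring
      rw [h2, h3, ← hK] at h1
      linarith
    have hay : a ≤ y := arcsinhp_le hp1 hy.le
    have hagl : y * (1/g) ≤ a := by
      have h0 := le_arcsinhp hp1 hy.le
      rw [show (1 + y ^ p) ^ (-1/p) = 1/g by
        rw [es, neg_div, Real.rpow_neg hs0.le, ← hgdef]
        exact (one_div g).symm] at h0
      exact h0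
    have hapu : a ^ p ≤ u := by
      rw [hudef]
      exact Real.rpow_le_rpow ha.le hay hp0.le
    have hpow : (y * (1/g)) ^ p = u / s := by
      rw [one_div, Real.mul_rpow hy.le (inv_nonneg.2 hg0.le), Real.inv_rpow hg0.le, hgp,
        ← hudef, div_eq_mul_inv]
    have hapl : u / s ≤ a ^ p := by
      rw [← hpow]
      exact Real.rpow_le_rpow (by positivity) hagl hp0.le
    have hap0 : 0 < a ^ p := Real.rpow_pos_of_pos ha p
    -- numerator bounds: N = a * (g/s) - y
    have hNle : a * (g/s) - y ≤ y * (s ^ c - 1) := by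
      have h1 : a * (g/s) < (y * (h/g)) * (g/s) :=
        mul_lt_mul_of_pos_right haU (by positivity)
      have h2 : (y * (h/g)) * (g/s) = y * (h/s) := by field_simp
      rw [← hμ]
      nlinarith
    have hNge : y * ((s ^ c - 1) - K * u ^ 2) ≤ a * (g/s) - y := by
      have h1 : (y * (h/g) - K * (y * u ^ 2)) * (g/s) ≤ a * (g/s) :=
        mul_le_mul_of_nonneg_right haL.le (by positivity)
      have h2 : K * (y * u ^ 2) * (g / s) ≤ K * (y * u ^ 2) := by
        have hgs1 : g / s ≤ 1 := by rw [div_le_one hs0]; exact hgs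
        nlinarith [mul_pos hK0 (mul_pos hy (mul_pos hu0 hu0))]
      have h3 : (y * (h/g)) * (g/s) = y * (h/s) := by field_simp
      rw [← hμ]
      nlinarith [sq_nonneg u]
    have hQQeq : QQ p y = (a * (g/s) - y) / (p * a ^ p * y) := by
      rw [QQ, es, r1, ← hadef]
    have hQhiy : Qhi y = (s ^ c - 1) / (p * u) := by
      rw [hQhi]
    have hQloy : Qlo y = s * ((s ^ c - 1) - K * u ^ 2) / (p * u) := by
      rw [hQlo]
      simp only
      rw [hQhiy, es, ← hudef]
      field_simp
      try ring
    constructor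
    · rw [hQQeq, hQloy, div_le_div_iff₀ (by positivity) (by positivity)]
      have hm : (s ^ c - 1) - K * u ^ 2 ≤ 0 := by nlinarith [sq_nonneg u]
      have hsau : u ≤ s * a ^ p := by
        have := hapl
        rw [div_le_iff₀ hs0] at this
        linarith
      have hmy : ((s ^ c - 1) - K * u ^ 2) * (p * y) ≤ 0 :=
        mul_nonpos_of_nonpos_of_nonneg hm (by positivity)
      have t1 : ((s ^ c - 1) - K * u ^ 2) * (p * y) * (s * a ^ p)
          ≤ ((s ^ c - 1) - K * u ^ 2) * (p * y) * u := by
        exact mul_le_mul_of_nonpos_left hsau hmy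
      have hint2 := mul_le_mul_of_nonneg_right hNge (show (0:ℝ) ≤ p * u by positivity)
      calc s * (s ^ c - 1 - K * u ^ 2) * (p * a ^ p * y)
          = (s ^ c - 1 - K * u ^ 2) * (p * y) * (s * a ^ p) := by ring
        _ ≤ (s ^ c - 1 - K * u ^ 2) * (p * y) * u := t1
        _ = y * (s ^ c - 1 - K * u ^ 2) * (p * u) := by ring
        _ ≤ (a * (g / s) - y) * (p * u) := hint2
    · rw [hQQeq, hQhiy, div_le_div_iff₀ (by positivity) (by positivity)]
      have hint1 := mul_le_mul_of_nonneg_right hNle (show (0:ℝ) ≤ p * u by positivity)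
      have hint2 : 0 ≤ (1 - s ^ c) * (p * y * (u - a ^ p)) := by
        apply mul_nonneg (by linarith)
        apply mul_nonneg (by positivity)
        linarith
      nlinarith [hint1, hint2]
  -- limits
  have hQhiT : Filter.Tendsto Qhi (nhdsWithin 0 (Set.Ioi 0)) (nhds (-1/(p+1))) := by
    have hder : HasDerivAt (fun v : ℝ => (1 + v) ^ c) c 0 := by
      have h1 : HasDerivAt (fun v : ℝ => 1 + v) 1 0 := (hasDerivAt_id 0).const_add 1
      have h2 := h1.rpow_const (p := c) (Or.inl (by norm_num))
      have : (1:ℝ) * c * (1 + 0) ^ (c - 1) = c := by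
        norm_num
      rwa [this] at h2
    have hslope := hasDerivAt_iff_tendsto_slope.1 hder
    have hcomp : Filter.Tendsto (fun y : ℝ => y ^ p) (nhdsWithin 0 (Set.Ioi 0))
        (nhdsWithin 0 {(0:ℝ)}ᶜ) := by
      rw [tendsto_nhdsWithin_iff]
      exact ⟨hu_t, by
        filter_upwards [self_mem_nhdsWithin] with t ht
        exact Set.mem_compl_singleton_iff.2 (Real.rpow_pos_of_pos ht p).ne'⟩
    have hT := (hslope.comp hcomp).div_const p
    have hcp : c / p = -1 / (p + 1) := by
      rw [hc]
      field_simp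
    rw [hcp] at hT
    apply hT.congr'
    filter_upwards [self_mem_nhdsWithin] with y hy
    have hu0 : 0 < y ^ p := Real.rpow_pos_of_pos hy p
    show slope (fun v : ℝ => (1 + v) ^ c) 0 (y ^ p) / p = Qhi y
    rw [slope_def_field, hQhi]
    simp only
    norm_num
    rw [div_div]
    ring_nf
  have hQloT : Filter.Tendsto Qlo (nhdsWithin 0 (Set.Ioi 0)) (nhds (-1/(p+1))) := by
    have h1 : Filter.Tendsto (fun y : ℝ => 1 + y ^ p) (nhdsWithin 0 (Set.Ioi 0)) (nhds 1) := by
      have := hu_t.const_add 1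
      simpa using this
    have h2 : Filter.Tendsto (fun y : ℝ => Qhi y - K / p * y ^ p)
        (nhdsWithin 0 (Set.Ioi 0)) (nhds (-1/(p+1))) := by
      have := hQhiT.sub (hu_t.const_mul (K / p))
      simpa using this
    have := h1.mul h2
    simpa using this
  exact tendsto_of_tendsto_of_tendsto_of_le_of_le' hQloT hQhiT
    (by filter_upwards [self_mem_nhdsWithin] with y hy; exact (hbound y hy).1)
    (by filter_upwards [self_mem_nhdsWithin] with y hy; exact (hbound y hy).2)

end Derivs

lemma pos_of_deriv_pos_tendsto {F F' : ℝ → ℝ}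
    (h0 : Filter.Tendsto F (nhdsWithin 0 (Set.Ioi 0)) (nhds 0))
    (hd : ∀ x, 0 < x → HasDerivAt F (F' x) x) (hpos : ∀ x, 0 < x → 0 < F' x) :
    ∀ y, 0 < y → 0 < F y := by
  have mono : StrictMonoOn F (Set.Ioi 0) := by
    refine strictMonoOn_of_deriv_pos (convex_Ioi 0) ?_ ?_
    · exact fun x hx => (hd x hx).continuousAt.continuousWithinAt
    · intro x hx
      rw [interior_Ioi] at hx
      rw [(hd x hx).deriv]
      exact hpos x hx
  intro y hy
  have h1 : 0 ≤ F (y/2) := by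
    refine le_of_tendsto h0 ?_
    filter_upwards [Ioo_mem_nhdsGT_of_mem (Set.mem_Ico.2 ⟨le_refl 0, half_pos hy⟩)] with t ht
    exact (mono ht.1 (Set.mem_Ioi.2 (half_pos hy)) ht.2).le
  have h2 := mono (Set.mem_Ioi.2 (half_pos hy)) (Set.mem_Ioi.2 hy) (by linarith)
  linarith

section Mono
variable {p : ℝ} (hp : 2 ≤ p)
include hp

lemma QQ_mono : StrictMonoOn (QQ p) (Set.Ioi 0) := by
  refine strictMonoOn_of_deriv_pos (convex_Ioi 0) ?_ ?_
  · intro x hx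
    obtain ⟨q', hq, _⟩ := QQ_hasDerivAt_pos hp hx
    exact hq.continuousAt.continuousWithinAt
  · intro x hx
    rw [interior_Ioi] at hx
    obtain ⟨q', hq, hq0⟩ := QQ_hasDerivAt_pos hp hx
    rw [hq.deriv]
    exact hq0

lemma QQ_gt {y : ℝ} (hy : 0 < y) : -1/(p+1) < QQ p y := by
  have h1 : -1/(p+1) ≤ QQ p (y/2) := by
    refine le_of_tendsto (QQ_tendsto hp) ?_
    filter_upwards [Ioo_mem_nhdsGT_of_mem (Set.mem_Ico.2 ⟨le_refl 0, half_pos hy⟩)] with t ht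
    exact (QQ_mono hp ht.1 (Set.mem_Ioi.2 (half_pos hy)) ht.2).le
  have h2 := QQ_mono hp (Set.mem_Ioi.2 (half_pos hy)) (Set.mem_Ioi.2 hy) (by linarith)
  linarith

lemma u_tendsto : Filter.Tendsto (fun y : ℝ => y ^ p) (nhdsWithin 0 (Set.Ioi 0)) (nhds 0) := by
  have hp0 : 0 < p := by linarith
  have hcont := (Real.continuousAt_rpow_const 0 p (Or.inr hp0.le)).tendsto
  rw [Real.zero_rpow hp0.ne'] at hcont
  exact hcont.mono_left nhdsWithin_le_nhds

lemma HH_tendsto : Filter.Tendsto (HH p) (nhdsWithin 0 (Set.Ioi 0)) (nhds 0) := by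
  have hp1 : 1 < p := by linarith
  have hp0 : 0 < p := by linarith
  apply squeeze_zero' ?_ ?_ (u_tendsto hp)
  · filter_upwards [self_mem_nhdsWithin] with t ht
    exact Real.rpow_nonneg (arcsinhp_nonneg hp1 (le_of_lt ht)) p
  · filter_upwards [self_mem_nhdsWithin] with t ht
    exact Real.rpow_le_rpow (arcsinhp_nonneg hp1 (le_of_lt ht)) (arcsinhp_le hp1 (le_of_lt ht))
      hp0.le

lemma GG_tendsto : Filter.Tendsto (GG p) (nhdsWithin 0 (Set.Ioi 0)) (nhds 0) := by
  have hp1 : 1 < p := by linarith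
  have hp0 : 0 < p := by linarith
  have hlog : Filter.Tendsto (fun y : ℝ => Real.log (1 + y ^ p)) (nhdsWithin 0 (Set.Ioi 0))
      (nhds 0) := by
    have h1 : Filter.Tendsto (fun y : ℝ => 1 + y ^ p) (nhdsWithin 0 (Set.Ioi 0)) (nhds 1) := by
      have := (u_tendsto hp).const_add 1
      simpa using this
    have h2 := (Real.continuousAt_log (by norm_num : (1:ℝ) ≠ 0)).tendsto
    rw [Real.log_one] at h2
    exact h2.comp h1
  apply tendsto_of_tendsto_of_tendsto_of_le_of_le'
    (g := fun y : ℝ => -(p⁻¹ * Real.log (1 + y ^ p))) (h := fun _ => (0:ℝ))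
  · have := (hlog.const_mul p⁻¹).neg
    simpa using this
  · exact tendsto_const_nhds
  · filter_upwards [self_mem_nhdsWithin] with y hy
    have hy' : (0:ℝ) < y := hy
    have ha : 0 < arcsinhp p y := arcsinhp_pos hp1 hy'
    have hlogle : Real.log (arcsinhp p y) ≤ Real.log y :=
      Real.log_le_log ha (arcsinhp_le hp1 hy'.le)
    rw [GG]
    linarith
  · filter_upwards [self_mem_nhdsWithin] with y hy
    have hy' : (0:ℝ) < y := hy
    have ha : 0 < arcsinhp p y := arcsinhp_pos hp1 hy'
    have hu0 : 0 < y ^ p := Real.rpow_pos_of_pos hy' p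
    have hs0 : (0:ℝ) < 1 + y ^ p := by linarith
    have hg0 : 0 < (1 + y ^ p) ^ (1/p) := Real.rpow_pos_of_pos hs0 _
    have h1 : y / arcsinhp p y ≤ (1 + y ^ p) ^ (1/p) := by
      have h2 := le_arcsinhp hp1 hy'.le
      have h3 : (1 + y ^ p) ^ (-1/p) = ((1 + y ^ p) ^ (1/p))⁻¹ := by
        rw [neg_div, Real.rpow_neg hs0.le]
      rw [h3] at h2
      rw [div_le_iff₀ ha]
      calc y = y * ((1 + y ^ p) ^ (1/p))⁻¹ * (1 + y ^ p) ^ (1/p) := by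
            field_simp
        _ ≤ arcsinhp p y * (1 + y ^ p) ^ (1/p) :=
            mul_le_mul_of_nonneg_right h2 hg0.le
        _ = (1 + y ^ p) ^ (1/p) * arcsinhp p y := mul_comm _ _
    have h4 : Real.log (y / arcsinhp p y) ≤ Real.log ((1 + y ^ p) ^ (1/p)) :=
      Real.log_le_log (div_pos hy' ha) h1
    rw [Real.log_div hy'.ne' ha.ne', Real.log_rpow hs0, one_div] at h4
    rw [GG]
    linarith [h4]

lemma EE_pos : ∀ y, 0 < y → (-1/(p+1)) * HH p y < GG p y := by
  have hp1 : 1 < p := by linarith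
  have key := pos_of_deriv_pos_tendsto
    (F := fun y => GG p y - (-1/(p+1)) * HH p y)
    (F' := fun x => (QQ p x - (-1/(p+1))) * ((1 + x ^ p) ^ (-1 / p) * p * arcsinhp p x ^ (p - 1)))
    ?_ ?_ ?_
  · intro y hy
    have := key y hy
    linarith
  · have := (GG_tendsto hp).sub ((HH_tendsto hp).const_mul (-1/(p+1)))
    simpa using this
  · intro x hx
    have := (GG_hasDerivAt hp hx).sub ((HH_hasDerivAt hp hx).const_mul (-1/(p+1)))
    refine this.congr_deriv ?_
    ring
  · intro x hx
    exact mul_pos (sub_pos.2 (QQ_gt hp hx)) (HH_deriv_pos hp hx)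

lemma WW_pos : ∀ y, 0 < y → GG p y < QQ p y * HH p y := by
  have hp1 : 1 < p := by linarith
  have key := pos_of_deriv_pos_tendsto
    (F := fun y => QQ p y * HH p y - GG p y)
    (F' := fun x => if hx : 0 < x then (QQ_hasDerivAt_pos hp hx).choose * HH p x else 0)
    ?_ ?_ ?_
  · intro y hy
    have h2 : 0 < QQ p y * HH p y - GG p y := key y hy
    linarith
  · have := ((QQ_tendsto hp).mul (HH_tendsto hp)).sub (GG_tendsto hp)
    simpa using this
  · intro x hx
    obtain ⟨hq, hq0⟩ := (QQ_hasDerivAt_pos hp hx).choose_spec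
    simp only [dif_pos hx]
    have := (hq.mul (HH_hasDerivAt hp hx)).sub (GG_hasDerivAt hp hx)
    refine this.congr_deriv ?_
    rw [HH]
    ring
  · intro x hx
    simp only [dif_pos hx]
    obtain ⟨hq, hq0⟩ := (QQ_hasDerivAt_pos hp hx).choose_spec
    have hH : 0 < HH p x := Real.rpow_pos_of_pos (arcsinhp_pos hp1 hx) p
    exact mul_pos hq0 hH

lemma FF_mono : StrictMonoOn (fun y => GG p y / HH p y) (Set.Ioi 0) := by
  have hp1 : 1 < p := by linarith
  have hdiv : ∀ x : ℝ, 0 < x → HasDerivAt (fun y => GG p y / HH p y)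
      ((QQ p x * ((1 + x ^ p) ^ (-1 / p) * p * arcsinhp p x ^ (p - 1)) * HH p x
        - GG p x * ((1 + x ^ p) ^ (-1 / p) * p * arcsinhp p x ^ (p - 1))) / HH p x ^ 2) x := by
    intro x hx
    have hH : HH p x ≠ 0 := (Real.rpow_pos_of_pos (arcsinhp_pos hp1 hx) p).ne'
    exact (GG_hasDerivAt hp hx).div (HH_hasDerivAt hp hx) hH
  refine strictMonoOn_of_deriv_pos (convex_Ioi 0) ?_ ?_
  · intro x hx
    exact (hdiv x hx).continuousAt.continuousWithinAt
  · intro x hx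
    rw [interior_Ioi] at hx
    rw [(hdiv x hx).deriv]
    have hH : 0 < HH p x := Real.rpow_pos_of_pos (arcsinhp_pos hp1 hx) p
    have hW := WW_pos hp x hx
    have hD := HH_deriv_pos hp hx
    apply div_pos ?_ (by positivity)
    have : QQ p x * ((1 + x ^ p) ^ (-1 / p) * p * arcsinhp p x ^ (p - 1)) * HH p x
        - GG p x * ((1 + x ^ p) ^ (-1 / p) * p * arcsinhp p x ^ (p - 1))
        = ((1 + x ^ p) ^ (-1 / p) * p * arcsinhp p x ^ (p - 1)) * (QQ p x * HH p x - GG p x) := by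
      ring
    rw [this]
    exact mul_pos hD (by linarith)

end Mono

/-- For `p ≥ 2`, `exp(λ₂ x^p) < tanhₚ(x)/x < exp(η₂ x^p)` on `(0, m)`, with
`λ₂ = −1/(p+1)`, `η₂ = ln((tanhₚ m)/m)/m^p`, stated via `y = sinhₚ x`, `x = arcsinhₚ y`. -/
theorem exp_bounds_tanhp_div (p : ℝ) (hp : 2 ≤ p) (y₀ : ℝ) (hy₀ : 0 < y₀)
    (m lam₂ η₂ : ℝ) (hm : m = arcsinhp p y₀)
    (hlam₂ : lam₂ = -1 / (p + 1))
    (hη₂ : η₂ = Real.log (y₀ / (m * (1 + y₀ ^ p) ^ (1 / p))) / m ^ p) :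
    ∀ y ∈ Set.Ioo 0 y₀,
      Real.exp (lam₂ * arcsinhp p y ^ p) < y / (arcsinhp p y * (1 + y ^ p) ^ (1 / p)) ∧
      y / (arcsinhp p y * (1 + y ^ p) ^ (1 / p)) < Real.exp (η₂ * arcsinhp p y ^ p) := by
  have hp1 : 1 < p := by linarith
  have hp0 : 0 < p := by linarith
  -- log of ratio equals GG
  have hlogR : ∀ z : ℝ, 0 < z →
      Real.log (z / (arcsinhp p z * (1 + z ^ p) ^ (1 / p))) = GG p z := by
    intro z hz
    have ha : 0 < arcsinhp p z := arcsinhp_pos hp1 hz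
    have hu0 : 0 < z ^ p := Real.rpow_pos_of_pos hz p
    have hs0 : (0:ℝ) < 1 + z ^ p := by linarith
    have hg0 : 0 < (1 + z ^ p) ^ (1/p) := Real.rpow_pos_of_pos hs0 _
    rw [Real.log_div hz.ne' (by positivity), Real.log_mul ha.ne' hg0.ne',
      Real.log_rpow hs0, GG]
    ring
  intro y hy
  obtain ⟨hy0, hyy0⟩ := hy
  have ha : 0 < arcsinhp p y := arcsinhp_pos hp1 hy0
  have ham : 0 < arcsinhp p y₀ := arcsinhp_pos hp1 hy₀
  have hu0 : 0 < y ^ p := Real.rpow_pos_of_pos hy0 p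
  have hs0 : (0:ℝ) < 1 + y ^ p := by linarith
  have hg0 : 0 < (1 + y ^ p) ^ (1/p) := Real.rpow_pos_of_pos hs0 _
  have hR : 0 < y / (arcsinhp p y * (1 + y ^ p) ^ (1 / p)) := by positivity
  have hHH : 0 < HH p y := Real.rpow_pos_of_pos ha p
  have hHH₀ : 0 < HH p y₀ := Real.rpow_pos_of_pos ham p
  constructor
  · -- left inequality
    rw [← Real.exp_log hR, Real.exp_lt_exp, hlogR y hy0, hlam₂]
    have := EE_pos hp y hy0
    calc -1 / (p + 1) * arcsinhp p y ^ p = (-1/(p+1)) * HH p y := by rw [HH]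
      _ < GG p y := this
  · -- right inequality
    have hη : η₂ = GG p y₀ / HH p y₀ := by
      rw [hη₂, hm, hlogR y₀ hy₀, HH]
    have hmono := FF_mono hp (Set.mem_Ioi.2 hy0) (Set.mem_Ioi.2 hy₀) hyy0
    simp only at hmono
    have hlt : GG p y < η₂ * HH p y := by
      rw [hη]
      exact (div_lt_iff₀ hHH).1 hmono
    rw [← Real.exp_log hR, Real.exp_lt_exp, hlogR y hy0]
    calc GG p y < η₂ * HH p y := hlt
      _ = η₂ * arcsinhp p y ^ p := by rw [HH]
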